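/- arXiv:1911.12220 — 9 statements merged into one kernel-verified Lean document; each statement's English description precedes it below -/
import Mathlib

section
/- Let p be a prime and let α ≥ 0 and R ≥ 0 be integers. Let (Λ_R(α,β))_{α−R ≤ β ≤ α} be the unique rational numbers satisfying ∑_{β=α−R}^{α} Λ_R(α,β)·C((p−1)X+α, α−β) = C(R−X, R) in ℚ[X]. Then every Λ_R(α,β) is a p-adic integer, i.e. v_p(Λ_R(α,β)) ≥ 0 for all β with α−R ≤ β ≤ α. -/
/-!
Evaluating the defining identity at `X = (k - α)/(p - 1)` for `k ∈ ℕ` turns it into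
`∑_{j ≤ R} Λ(α - j) C(k, j) = C(R - (k - α)/(p - 1), R)`. By Newton's forward-difference
inversion, `Λ(α - j)` is the `j`-th forward difference at `0` of the right-hand side as a function
of `k`, hence an integer combination of its values. Since `p - 1` is a `p`-adic unit, each value is
a binomial coefficient `C(z, R)` with `z ∈ ℤ_p`, and `ℤ_p` is a binomial ring (`ℕ` is dense in it),
so all these values, and therefore all `Λ(α - j)`, are `p`-adic integers.
-/

open Polynomial

/-- The polynomial binomial coefficient `C(f, m) = f(f-1)⋯(f-m+1)/m!`. -/
noncomputable def polyBinom (f : Polynomial ℚ) (m : ℕ) : Polynomial ℚ :=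
  Polynomial.C ((m.factorial : ℚ))⁻¹ * ∏ i ∈ Finset.range m, (f - Polynomial.C (i : ℚ))

open Finset fwdDiff

section fwdDiff

variable {M G : Type*} [AddCommMonoid M] [AddCommGroup G]

lemma fwdDiff_iter_zsmul_const (h : M) (g : M → ℤ) (c : G) (n : ℕ) (y : M) :
    Δ_[h] ^[n] (fun x ↦ g x • c) y = Δ_[h] ^[n] g y • c := by
  simp only [fwdDiff_iter_eq_sum_shift, sum_smul, smul_assoc]

lemma fwdDiff_iter_mem_addSubgroup (S : AddSubgroup G) (h : M) {f : M → G} (hf : ∀ x, f x ∈ S)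
    (n : ℕ) (y : M) : Δ_[h] ^[n] f y ∈ S := by
  rw [fwdDiff_iter_eq_sum_shift]
  exact S.sum_mem fun k _ ↦ S.zsmul_mem (hf _) _

lemma fwdDiff_iter_sum_choose_zsmul_zero (c : ℕ → G) {N m : ℕ} (hm : m ≤ N) :
    Δ_[1] ^[m] (fun k : ℕ ↦ ∑ j ∈ range (N + 1), (k.choose j : ℤ) • c j) 0 = c m := by
  have hsum : (fun k : ℕ ↦ ∑ j ∈ range (N + 1), (k.choose j : ℤ) • c j)
      = ∑ j ∈ range (N + 1), fun k : ℕ ↦ (k.choose j : ℤ) • c j := by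
    ext k
    rw [Finset.sum_apply]
  rw [hsum, fwdDiff_iter_finsetSum, Finset.sum_apply]
  simp_rw [fwdDiff_iter_zsmul_const, fwdDiff_iter_choose_zero, ite_smul, one_smul, zero_smul]
  rw [sum_ite_eq, if_pos (mem_range.mpr (Nat.lt_succ_of_le hm))]

end fwdDiff

section padic

variable (p : ℕ) [Fact p.Prime]

noncomputable def ratPadicIntegers : Subring ℚ := (PadicInt.subring p).comap (Rat.castHom ℚ_[p])

variable {p}

lemma mem_ratPadicIntegers_iff_norm_le_one {q : ℚ} :
    q ∈ ratPadicIntegers p ↔ ‖(q : ℚ_[p])‖ ≤ 1 := Iff.rfl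

lemma mem_ratPadicIntegers_iff_padicValRat_nonneg {q : ℚ} :
    q ∈ ratPadicIntegers p ↔ 0 ≤ padicValRat p q := by
  rw [mem_ratPadicIntegers_iff_norm_le_one, Padic.norm_le_one_iff_val_nonneg,
    Padic.valuation_ratCast]

lemma Ring.choose_mem_ratPadicIntegers {q : ℚ} (hq : q ∈ ratPadicIntegers p) (m : ℕ) :
    Ring.choose q m ∈ ratPadicIntegers p := by
  let z : ℤ_[p] := ⟨q, hq⟩
  rw [mem_ratPadicIntegers_iff_norm_le_one, ← Rat.coe_castHom, Ring.map_choose,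
    show Rat.castHom ℚ_[p] q = PadicInt.Coe.ringHom z from rfl, ← Ring.map_choose]
  exact (Ring.choose z m).norm_le_one

lemma inv_natCast_sub_one_mem_ratPadicIntegers : ((p : ℚ) - 1)⁻¹ ∈ ratPadicIntegers p := by
  have hp : p.Prime := Fact.out
  rw [mem_ratPadicIntegers_iff_padicValRat_nonneg, padicValRat.inv, ← Nat.cast_pred hp.pos,
    padicValRat.of_nat, padicValNat.eq_zero_of_not_dvd (Nat.not_dvd_of_pos_of_lt
      (Nat.sub_pos_of_lt hp.one_lt) (Nat.sub_lt hp.pos one_pos))]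
  simp

end padic

lemma polyBinom_eval (f : ℚ[X]) (m : ℕ) (x : ℚ) :
    (polyBinom f m).eval x = Ring.choose (f.eval x) m := by
  rw [Ring.choose_eq_smul, ← aeval_eq_smeval, ← eval_map_algebraMap, descPochhammer_map,
    descPochhammer_eval_eq_prod_range, polyBinom, eval_mul, eval_C, eval_prod, smul_eq_mul]
  simp

lemma sum_Icc_sub_eq_sum_range {M : Type*} [AddCommMonoid M] {α R : ℤ} (hR : 0 ≤ R)
    (F : ℤ → M) : ∑ β ∈ Icc (α - R) α, F β = ∑ j ∈ range (R.toNat + 1), F (α - j) := by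
  refine sum_nbij' (fun β ↦ (α - β).toNat) (fun j ↦ α - j) ?_ ?_ ?_ ?_ ?_
  all_goals intro b hb; simp only [mem_Icc, mem_range] at hb ⊢
  all_goals first | omega | congr 1; omega

lemma sum_choose_zsmul_eq_of_sum_polyBinom_eq {a : ℚ} (ha : a ≠ 0) {α R : ℤ} (hR : 0 ≤ R)
    {Λ : ℤ → ℚ}
    (hΛ : ∑ β ∈ Icc (α - R) α, C (Λ β) * polyBinom (C a * X + C (α : ℚ)) (α - β).toNat
      = polyBinom (C (R : ℚ) - X) R.toNat) (k : ℕ) :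
    ∑ j ∈ range (R.toNat + 1), (k.choose j : ℤ) • Λ (α - j)
      = Ring.choose ((R : ℚ) - ((k : ℚ) - α) / a) R.toNat := by
  have hx : (C a * X + C (α : ℚ)).eval (((k : ℚ) - α) / a) = (k : ℚ) := by
    simp only [eval_add, eval_mul, eval_C, eval_X]
    field_simp
    ring
  have h := congrArg (eval (((k : ℚ) - α) / a)) hΛ
  simp only [eval_finsetSum, eval_mul, eval_C, polyBinom_eval, hx, eval_sub, eval_X,
    Ring.choose_natCast, sum_Icc_sub_eq_sum_range hR, sub_sub_cancel, Int.toNat_natCast] at h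
  rw [← h]
  simp only [zsmul_eq_mul, Int.cast_natCast, mul_comm]

theorem lambda_family_padic_integer_general (p : ℕ) (hp : p.Prime) (α R : ℤ)
    (hR : 0 ≤ R) (Λ : ℤ → ℚ)
    (hΛ : ∑ β ∈ Finset.Icc (α - R) α,
        Polynomial.C (Λ β) *
          polyBinom (Polynomial.C ((p : ℚ) - 1) * Polynomial.X + Polynomial.C (α : ℚ))
            (α - β).toNat
      = polyBinom (Polynomial.C (R : ℚ) - Polynomial.X) R.toNat) :
    ∀ β ∈ Finset.Icc (α - R) α, 0 ≤ padicValRat p (Λ β) := by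
  have : Fact p.Prime := ⟨hp⟩
  have hp1 : (p : ℚ) - 1 ≠ 0 := sub_ne_zero.mpr (by exact_mod_cast hp.one_lt.ne')
  intro β hβ
  obtain ⟨j, hj, rfl⟩ : ∃ j ≤ R.toNat, β = α - j := ⟨(α - β).toNat, by grind, by grind⟩
  rw [← mem_ratPadicIntegers_iff_padicValRat_nonneg,
    ← fwdDiff_iter_sum_choose_zsmul_zero (fun j ↦ Λ (α - j)) hj]
  refine fwdDiff_iter_mem_addSubgroup (ratPadicIntegers p).toAddSubgroup 1 (fun k ↦ ?_) j 0
  rw [sum_choose_zsmul_eq_of_sum_polyBinom_eq hp1 hR hΛ k, div_eq_mul_inv]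
  exact Ring.choose_mem_ratPadicIntegers (sub_mem (intCast_mem _ R)
    (mul_mem (sub_mem (natCast_mem _ k) (intCast_mem _ α))
      inv_natCast_sub_one_mem_ratPadicIntegers)) _

/-- Let `p` be a prime, `α ≥ 0`, `R ≥ 0` integers, and let
`(Λ β)_{α-R ≤ β ≤ α}` be the unique rationals with
`∑_{β=α-R}^{α} Λ_R(α,β)·C((p-1)X+α, α-β) = C(R-X, R)` in `ℚ[X]`.
Then every `Λ_R(α,β)` is a `p`-adic integer: `v_p(Λ_R(α,β)) ≥ 0`. -/
theorem lambda_family_padic_integer (p : ℕ) (hp : p.Prime) (α R : ℤ)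
    (hα : 0 ≤ α) (hR : 0 ≤ R) (Λ : ℤ → ℚ)
    (hΛ : ∑ β ∈ Finset.Icc (α - R) α,
        Polynomial.C (Λ β) *
          polyBinom (Polynomial.C ((p : ℚ) - 1) * Polynomial.X + Polynomial.C (α : ℚ))
            (α - β).toNat
      = polyBinom (Polynomial.C (R : ℚ) - Polynomial.X) R.toNat) :
    ∀ β ∈ Finset.Icc (α - R) α, 0 ≤ padicValRat p (Λ β) :=
  lambda_family_padic_integer_general p hp α R hR Λ hΛ
end

section
/- Let p be a prime and let r, α, ϱ' be integers with r ≥ α ≥ ϱ' ≥ 1, and let i ∈ {1, …, ϱ'}. Then ∑_{l=α−ϱ'}^{α} Λ_{ϱ'}(α,l)·binom(r, α−l)·binom(r−α+l, i(p−1)+l) = 0, where the binomial coefficients of natural numbers are the usual ones (equal to 0 when the lower entry exceeds the upper entry). -/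
open Polynomial

/-!
Evaluating the defining identity of `Λ` at `X = i` turns `(p-1)X + α` into `K = i(p-1) + α`
and `C(ϱ' - X, ϱ')` into `binom(ϱ' - i, ϱ') = 0`, so `∑ Λ(l) binom(K, α-l) = 0`. The trinomial
revision `binom(r, α-l) binom(r-α+l, K-α+l) = binom(r, K) binom(K, α-l)` then exhibits the sum
in question as `binom(r, K)` times this vanishing sum.
-/

lemma eval_polyBinom (f : ℚ[X]) (m : ℕ) (x : ℚ) :
    (polyBinom f m).eval x = (descPochhammer ℚ m).eval (f.eval x) / m.factorial := by
  simp [polyBinom, eval_prod, descPochhammer_eval_eq_prod_range, div_eq_inv_mul]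

lemma eval_polyBinom_of_eval_eq_natCast {f : ℚ[X]} {x : ℚ} {n : ℕ} (hf : f.eval x = n)
    (m : ℕ) : (polyBinom f m).eval x = n.choose m := by
  rw [eval_polyBinom, hf, Nat.cast_choose_eq_descPochhammer_div]

lemma Nat.choose_mul_choose_sub_add {r a l : ℕ} (hla : l ≤ a) (har : a ≤ r) (j : ℕ) :
    r.choose (a - l) * (r - a + l).choose (j + l) = r.choose (j + a) * (j + a).choose (a - l) := by
  rw [Nat.choose_mul (by omega), show r - (a - l) = r - a + l by omega,
    show j + a - (a - l) = j + l by omega]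

theorem lambda_sum_vanishes_general (p r α ϱ' : ℕ) (hp : p.Prime)
    (h3 : α ≤ r)
    (Λ : ℕ → ℚ)
    (hΛ : ∑ l ∈ Finset.Icc (α - ϱ') α,
        Polynomial.C (Λ l) *
          polyBinom (Polynomial.C ((p : ℚ) - 1) * Polynomial.X + Polynomial.C (α : ℚ))
            (α - l)
      = polyBinom (Polynomial.C (ϱ' : ℚ) - Polynomial.X) ϱ')
    (i : ℕ) (hi1 : 1 ≤ i) (hi2 : i ≤ ϱ') :
    ∑ l ∈ Finset.Icc (α - ϱ') α,
        Λ l * (r.choose (α - l) : ℚ) * ((r - α + l).choose (i * (p - 1) + l) : ℚ) = 0 := by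
  set K := i * (p - 1) + α
  have hf : eval (i : ℚ) (C ((p : ℚ) - 1) * X + C (α : ℚ)) = K := by
    simp [K, Nat.cast_sub hp.one_le, mul_comm]
  have hg : eval (i : ℚ) (C (ϱ' : ℚ) - X) = (ϱ' - i : ℕ) := by
    simp [Nat.cast_sub hi2]
  have hK : ∑ l ∈ Finset.Icc (α - ϱ') α, Λ l * (K.choose (α - l) : ℚ) = 0 := by
    have := congrArg (eval (i : ℚ)) hΛ
    simpa only [eval_finsetSum, eval_mul, eval_C, eval_polyBinom_of_eval_eq_natCast hf,
      eval_polyBinom_of_eval_eq_natCast hg, Nat.choose_eq_zero_of_lt (by omega : ϱ' - i < ϱ'),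
      Nat.cast_zero] using this
  calc ∑ l ∈ Finset.Icc (α - ϱ') α,
        Λ l * (r.choose (α - l) : ℚ) * ((r - α + l).choose (i * (p - 1) + l) : ℚ)
      = ∑ l ∈ Finset.Icc (α - ϱ') α, (r.choose K : ℚ) * (Λ l * (K.choose (α - l) : ℚ)) := by
        refine Finset.sum_congr rfl fun l hl => ?_
        rw [mul_assoc, ← Nat.cast_mul,
          Nat.choose_mul_choose_sub_add (Finset.mem_Icc.1 hl).2 h3, Nat.cast_mul]
        ring
    _ = 0 := by rw [← Finset.mul_sum, hK, mul_zero]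

/-- Let `p` be a prime and `r ≥ α ≥ ϱ' ≥ 1` integers, and let
`i ∈ {1, …, ϱ'}`.  With `Λ = Λ_{ϱ'}(α, ·)` the unique family satisfying
`∑_{l=α-ϱ'}^{α} Λ_{ϱ'}(α,l)·C((p-1)X+α, α-l) = C(ϱ'-X, ϱ')` in `ℚ[X]`, one has
`∑_{l=α-ϱ'}^{α} Λ_{ϱ'}(α,l)·binom(r, α-l)·binom(r-α+l, i(p-1)+l) = 0`. -/
theorem lambda_sum_vanishes (p r α ϱ' : ℕ) (hp : p.Prime)
    (h1 : 1 ≤ ϱ') (h2 : ϱ' ≤ α) (h3 : α ≤ r)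
    (Λ : ℕ → ℚ)
    (hΛ : ∑ l ∈ Finset.Icc (α - ϱ') α,
        Polynomial.C (Λ l) *
          polyBinom (Polynomial.C ((p : ℚ) - 1) * Polynomial.X + Polynomial.C (α : ℚ))
            (α - l)
      = polyBinom (Polynomial.C (ϱ' : ℚ) - Polynomial.X) ϱ')
    (i : ℕ) (hi1 : 1 ≤ i) (hi2 : i ≤ ϱ') :
    ∑ l ∈ Finset.Icc (α - ϱ') α,
        Λ l * (r.choose (α - l) : ℚ) * ((r - α + l).choose (i * (p - 1) + l) : ℚ) = 0 :=
  lambda_sum_vanishes_general p r α ϱ' hp h3 Λ hΛ i hi1 hi2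
end

section
/- Let m ≥ 1, γ ≥ 0 and R ≥ 0 be integers. Then the determinant of the R × R matrix whose (i, j) entry, for 0 ≤ i, j < R, is the binomial coefficient binom(i·m + γ, j), equals m^{R(R−1)/2}. -/
/-!
Since `j! * binom(x, j)` is the falling factorial `x(x-1)⋯(x-j+1)`, a monic polynomial of degree
`j` in `x`, scaling column `j` by `j!` turns the matrix into one with the same determinant as the
Vandermonde matrix of the nodes `i m + γ`. That determinant ignores the shift `γ`, and scaling the
nodes by `m` multiplies it by `m ^ (0 + 1 + ⋯ + (R - 1))`; for the nodes `0, …, R - 1` it equals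
`∏ j!`, which cancels.
-/

open Finset Matrix
open scoped Nat

namespace Matrix

theorem vandermonde_const_mul {R : Type*} [CommRing R] {n : ℕ} (c : R) (v : Fin n → R) :
    vandermonde (fun i ↦ c * v i) = vandermonde v * diagonal fun j : Fin n ↦ c ^ (j : ℕ) := by
  ext i j
  simp [vandermonde_apply, mul_pow, mul_comm]

theorem det_vandermonde_const_mul {R : Type*} [CommRing R] {n : ℕ} (c : R) (v : Fin n → R) :
    (vandermonde fun i ↦ c * v i).det = c ^ (n * (n - 1) / 2) * (vandermonde v).det := by
  rw [vandermonde_const_mul, det_mul, det_diagonal, prod_pow_eq_pow_sum,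
    Fin.sum_univ_eq_sum_range (fun j ↦ j), sum_range_id, mul_comm]

theorem det_vandermonde_fin_eq_prod_factorial (n : ℕ) :
    (vandermonde fun i : Fin n ↦ (i : ℤ)).det = ∏ i : Fin n, ((i : ℕ)! : ℤ) := by
  cases n with
  | zero => simp
  | succ n =>
    rw [det_vandermonde_id_eq_superFactorial, ← Nat.prod_range_succ_factorial,
      Fin.prod_univ_eq_prod_range (fun i ↦ (i ! : ℤ))]
    push_cast
    rfl

theorem prod_factorial_mul_det_choose {n : ℕ} (v : Fin n → ℕ) :
    (∏ i : Fin n, ((i : ℕ)! : ℤ)) * (of fun i j : Fin n ↦ ((v i).choose j : ℤ)).det =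
      (vandermonde fun i ↦ (v i : ℤ)).det := by
  rw [det_eval_matrixOfPolynomials_eq_det_vandermonde _ (fun j ↦ descPochhammer ℤ j)
    (fun j ↦ descPochhammer_natDegree ℤ j) (fun j ↦ monic_descPochhammer ℤ j)]
  refine (det_mul_row (fun j : Fin n ↦ ((j : ℕ)! : ℤ)) _).symm.trans (congrArg det ?_)
  ext i j
  simp only [of_apply]
  rw [descPochhammer_eval_eq_descFactorial,
    Nat.descFactorial_eq_factorial_mul_choose, Nat.cast_mul]

end Matrix

theorem det_binomial_matrix_general (m γ R : ℕ) :
    Matrix.det (Matrix.of fun i j : Fin R => ((i.val * m + γ).choose j.val : ℤ))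
      = (m : ℤ) ^ (R * (R - 1) / 2) := by
  have hfact : (∏ i : Fin R, ((i : ℕ)! : ℤ)) ≠ 0 :=
    prod_ne_zero_iff.mpr fun i _ ↦ mod_cast (Nat.factorial_pos i).ne'
  apply mul_left_cancel₀ hfact
  calc (∏ i : Fin R, ((i : ℕ)! : ℤ)) * (of fun i j : Fin R ↦ ((i.val * m + γ).choose j : ℤ)).det
      = (vandermonde fun i : Fin R ↦ (m : ℤ) * i + γ).det := by
        rw [prod_factorial_mul_det_choose]
        congr! 3 with i
        push_cast
        ring
    _ = (m : ℤ) ^ (R * (R - 1) / 2) * ∏ i : Fin R, ((i : ℕ)! : ℤ) := by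
        rw [det_vandermonde_add, det_vandermonde_const_mul, det_vandermonde_fin_eq_prod_factorial]
    _ = _ := mul_comm _ _

/-- Let `m ≥ 1`, `γ ≥ 0` and `R ≥ 0` be integers. The determinant of the
`R × R` matrix whose `(i, j)` entry (for `0 ≤ i, j < R`) is `binom(i·m + γ, j)` equals
`m^(R(R-1)/2)`. -/
theorem det_binomial_matrix (m γ R : ℕ) (hm : 1 ≤ m) :
    Matrix.det (Matrix.of fun i j : Fin R => ((i.val * m + γ).choose j.val : ℤ))
      = (m : ℤ) ^ (R * (R - 1) / 2) :=
  det_binomial_matrix_general m γ R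
end

section
/- Let p > 3 be a prime, let r ≥ 1 be an integer, set ϱ = ⌊(r+1)/(p+1)⌋, let α be an integer with ϱ < α and α(p−1) ≤ r, and set ϱ' = ⌈(r−α)/p⌉ − 1. Then for every integer j ≥ 1 with j(p−1) ≤ α one has v_p(binom(r, α)) < j(p−1) + v_p(binom(r, α−j(p−1))) + v_p(binom(ϱ'+j, j)). -/
/-! With `β = α - j(p-1)`, the identity `C(r, α) C(α, β) = C(r, β) C(r - β, α - β)` reduces the
claim to `v_p(C(N + j(p-1), j(p-1))) < j(p-1) + v_p(C(ϱ' + j, j))` for `N = r - α`. Write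
`N = pϱ' + m + 1` with `m < p`: since `j(p-1) = pj - j`, adding `j(p-1)` to `N` in base `p` is,
up to the last digit, adding `j` to `ϱ'`. Through Kummer's formula
`(p-1) v_p(C(n+k, k)) = s(k) + s(n) - s(n+k)` for the base-`p` digit sum `s`, this makes the two
valuations differ by at most `(s(j(p-1)) + j) / (p-1) ≤ j p / (p-1)`, which is less than `j(p-1)`
as soon as `p ≥ 3`. -/

namespace Nat

theorem digit_sum_add_base_mul {b t : ℕ} (hb : 1 < b) (ht : t < b) (x : ℕ) :
    (b.digits (t + b * x)).sum = t + (b.digits x).sum := by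
  rcases eq_or_ne t 0 with rfl | ht0
  · rcases eq_or_ne x 0 with rfl | hx0
    · simp
    · rw [digits_add b hb 0 x (by omega) (.inr hx0), List.sum_cons]
  · rw [digits_add b hb t x ht (.inl ht0), List.sum_cons]

variable {p : ℕ} [hp : Fact p.Prime]

theorem digit_sum_add_le (a b : ℕ) :
    (p.digits (a + b)).sum ≤ (p.digits a).sum + (p.digits b).sum := by
  have hval : padicValNat p a ! + padicValNat p b ! ≤ padicValNat p (a + b)! := by
    rw [← padicValNat.mul (factorial_ne_zero a) (factorial_ne_zero b),
      ← padicValNat_dvd_iff_le (factorial_ne_zero _)]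
    exact pow_padicValNat_dvd.trans (factorial_mul_factorial_dvd_factorial_add a b)
  have := Nat.mul_le_mul_left (p - 1) hval
  rw [Nat.mul_add, sub_one_mul_padicValNat_factorial, sub_one_mul_padicValNat_factorial,
    sub_one_mul_padicValNat_factorial] at this
  have := digit_sum_le p a
  have := digit_sum_le p b
  have := digit_sum_le p (a + b)
  omega

theorem digit_sum_add_le_digit_sum_add (a b : ℕ) :
    (p.digits (a + b)).sum ≤ (p.digits a).sum + b :=
  (digit_sum_add_le a b).trans (Nat.add_le_add_left (digit_sum_le p b) _)

theorem digit_sum_base_mul_add_add_le {ϱ m j : ℕ} (hm : m < p) (hj : 0 < j) :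
    (p.digits (p * ϱ + m + 1)).sum + (p.digits (ϱ + j)).sum
      ≤ (p.digits ϱ).sum + (p.digits (p * ϱ + m + 1 + j * (p - 1))).sum + j := by
  have hp1 := hp.out.one_lt
  have hmul (x : ℕ) : (p.digits (p * x)).sum = (p.digits x).sum := by
    simpa using digit_sum_add_base_mul hp1 hp.out.pos x
  have hjp : j * (p - 1) + j = p * j := by
    rw [Nat.mul_sub_one, Nat.sub_add_cancel (Nat.le_mul_of_pos_right _ hp.out.pos), Nat.mul_comm]
  have hN : (p.digits (p * ϱ + m + 1)).sum ≤ (p.digits ϱ).sum + (m + 1) := by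
    simpa [hmul, Nat.add_assoc] using digit_sum_add_le_digit_sum_add (p := p) (p * ϱ) (m + 1)
  rcases le_or_gt j m with hjm | hmj
  · have hNk : p * ϱ + m + 1 + j * (p - 1) = (m + 1 - j) + p * (ϱ + j) := by
      rw [Nat.mul_add]; omega
    rw [hNk, digit_sum_add_base_mul hp1 (show m + 1 - j < p by omega)]
    omega
  · have hNk : p * (ϱ + j) = (p * ϱ + m + 1 + j * (p - 1)) + (j - (m + 1)) := by
      rw [Nat.mul_add]; omega
    have := digit_sum_add_le_digit_sum_add (p := p) (p * ϱ + m + 1 + j * (p - 1)) (j - (m + 1))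
    rw [← hNk, hmul] at this
    omega

end Nat

section

variable {p : ℕ} [hp : Fact p.Prime]

theorem sub_one_mul_padicValNat_choose_add_digit_sum (n k : ℕ) :
    (p - 1) * padicValNat p ((n + k).choose k) + (p.digits (n + k)).sum
      = (p.digits k).sum + (p.digits n).sum := by
  have := Nat.digit_sum_add_le (p := p) n k
  rw [sub_one_mul_padicValNat_choose_eq_sub_sum_digits']
  omega

theorem padicValNat_choose_le_add {n k s : ℕ} (hsk : s ≤ k) (hkn : k ≤ n) :
    padicValNat p (n.choose k)
      ≤ padicValNat p (n.choose s) + padicValNat p ((n - s).choose (k - s)) := by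
  rw [← padicValNat.mul (Nat.choose_ne_zero (hsk.trans hkn)) (Nat.choose_ne_zero (by omega)),
    ← Nat.choose_mul hsk, padicValNat.mul (Nat.choose_ne_zero hkn) (Nat.choose_ne_zero hsk)]
  exact Nat.le_add_right _ _

theorem padicValNat_choose_add_mul_sub_one_lt (hp3 : 3 ≤ p) {N j : ℕ} (hN : 0 < N)
    (hj : 0 < j) :
    padicValNat p ((N + j * (p - 1)).choose (j * (p - 1)))
      < j * (p - 1) + padicValNat p (((N + p - 1) / p - 1 + j).choose j) := by
  set ϱ := (N - 1) / p
  have hNϱ : p * ϱ + (N - 1) % p + 1 = N := by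
    have : p * ϱ + (N - 1) % p = N - 1 := Nat.div_add_mod (N - 1) p
    omega
  have hϱ : (N + p - 1) / p - 1 = ϱ := by
    rw [show N + p - 1 = N - 1 + p by omega, Nat.add_div_right _ hp.out.pos, Nat.add_sub_cancel]
  have hcarry := Nat.digit_sum_base_mul_add_add_le (ϱ := ϱ) (Nat.mod_lt (N - 1) hp.out.pos) hj
  rw [hNϱ] at hcarry
  have hv₁ := sub_one_mul_padicValNat_choose_add_digit_sum (p := p) N (j * (p - 1))
  have hv₂ := sub_one_mul_padicValNat_choose_add_digit_sum (p := p) ϱ j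
  have hk := Nat.digit_sum_le p (j * (p - 1))
  have hslack : j * (p - 1) + j < (p - 1) * (j * (p - 1)) := by
    obtain ⟨q, hq⟩ : ∃ q, p - 1 = q + 2 := ⟨p - 3, by omega⟩
    rw [hq]
    nlinarith [Nat.zero_le (j * q * q), Nat.zero_le (j * q)]
  rw [hϱ]
  refine Nat.lt_of_mul_lt_mul_left (a := p - 1) ?_
  rw [Nat.mul_add]
  omega

end

theorem lemma10_valuation_ineq_general (p r α j : ℕ) (hp : p.Prime) (hp3 : 3 < p)
    (hαr : α * (p - 1) ≤ r) (hj1 : 1 ≤ j) (hj : j * (p - 1) ≤ α) :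
    padicValNat p (r.choose α)
      < j * (p - 1) + padicValNat p (r.choose (α - j * (p - 1)))
        + padicValNat p (((r - α + p - 1) / p - 1 + j).choose j) := by
  have := Fact.mk hp
  have hαr' : α * 3 ≤ r := (Nat.mul_le_mul_left α (by omega)).trans hαr
  have hk : 0 < j * (p - 1) := Nat.mul_pos hj1 (by omega)
  have hsplit := padicValNat_choose_le_add (p := p) (Nat.sub_le α (j * (p - 1)))
    (show α ≤ r by omega)
  rw [show r - (α - j * (p - 1)) = r - α + j * (p - 1) by omega,
    show α - (α - j * (p - 1)) = j * (p - 1) by omega] at hsplit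
  have hkey := padicValNat_choose_add_mul_sub_one_lt hp3.le (show 0 < r - α by omega) hj1
  omega

/-- Lemma 10 of the paper. Let `p > 3` be a prime, `r ≥ 1`,
`ϱ = ⌊(r+1)/(p+1)⌋`, let `α` be an integer with `ϱ < α` and `α(p-1) ≤ r`, and set
`ϱ' = ⌈(r-α)/p⌉ - 1`.  Then for every integer `j ≥ 1` with `j(p-1) ≤ α` one has
`v_p(binom(r, α)) < j(p-1) + v_p(binom(r, α - j(p-1))) + v_p(binom(ϱ'+j, j))`. -/
theorem lemma10_valuation_ineq (p r α j : ℕ) (hp : p.Prime) (hp3 : 3 < p) (hr : 1 ≤ r)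
    (hϱα : (r + 1) / (p + 1) < α) (hαr : α * (p - 1) ≤ r)
    (hj1 : 1 ≤ j) (hj : j * (p - 1) ≤ α) :
    padicValNat p (r.choose α)
      < j * (p - 1) + padicValNat p (r.choose (α - j * (p - 1)))
        + padicValNat p (((r - α + p - 1) / p - 1 + j).choose j) :=
  lemma10_valuation_ineq_general p r α j hp hp3 hαr hj1 hj
end

section
/- Let p > 3 be a prime, let r ≥ 1 be an integer, set ϱ = ⌊(r+1)/(p+1)⌋, let α be an integer with ϱ < α and α(p−1) ≤ r, and set ϱ' = ⌈(r−α)/p⌉ − 1. Then for every integer i with ϱ' < i and i(p−1)+α ≤ r one has v_p(binom(r, α)) < (i(p−1)+2α−r) + v_p(binom(r, i(p−1)+α)) + v_p(binom(i−1, ϱ')). (In particular, under these hypotheses the integer i(p−1)+2α−r is positive.) -/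
/-!
Write `n = r - α = i p - q`, `m = i - q` and `D = i (p - 1) + 2 α - r`, so that `r = n + m + D`,
`α = m + D`, `i (p - 1) + α = n + D` and `ϱ' = i - 1 - ⌊q / p⌋`. Both `C(r, α) C(α, D)` and
`C(r, n + D) C(n + D, D)` count the same multinomial coefficient, so the claim becomes
`v_p C(n + D, D) < D + v_p C(m + D, D) + v_p C(i - 1, ⌊q / p⌋)`.

By Kummer's theorem `v_p C(n + D, D)` is at most the position `e` of the highest carry in `n + D`.
If `p ^ e ≤ D` then `e < D`. Otherwise `p ^ e ∣ n + d` for some `0 < d ≤ D`, and since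
`p ∣ n + q`, `p ^ (e - 1)` divides `m + t` with `0 < t ≤ D` (if `q ≤ d`) or `i - 1 - ⌊q/p⌋ + t`
with `0 < t ≤ ⌊q/p⌋ < D` (if `d < q`). Then adding `D` to `m`, respectively `⌊q/p⌋` to
`i - 1 - ⌊q/p⌋`, carries in every position from `log_p D + 1` to `e - 1`, and `log_p D + 2 ≤ D`.
-/

open Finset

namespace Nat

lemma log_add_two_le_self {p D : ℕ} (hp : 3 ≤ p) (hD : 2 ≤ D) : log p D + 2 ≤ D := by
  have hpow : p ^ log p D ≤ D := pow_log_le_self p (by omega)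
  have hmono : 3 ^ log p D ≤ p ^ log p D := Nat.pow_le_pow_left hp _
  have hbernoulli : 1 + log p D * 2 ≤ 3 ^ log p D :=
    one_add_le_pow_of_two_add_nonneg (a := 2) (by norm_num) _
  omega

lemma mul_sub_add_sub_one_div {p i q : ℕ} (hp : 0 < p) (hq : q ≤ i * p) :
    (i * p - q + p - 1) / p = i - q / p := by
  have hqp := div_add_mod' q p
  have hmod := mod_lt q hp
  have hdiv : q / p * p ≤ i * p := by omega
  apply Nat.div_eq_of_lt_le
  · rw [Nat.sub_mul]; omega
  · rw [Nat.add_mul, Nat.sub_mul]; omega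

lemma add_add_choose_mul_choose (n m D : ℕ) :
    (n + m + D).choose (m + D) * (m + D).choose D =
      (n + m + D).choose (n + D) * (n + D).choose D := by
  rw [choose_mul (le_add_left _ _), choose_mul (le_add_left _ _), add_tsub_cancel_right,
    add_tsub_cancel_right, add_tsub_cancel_right, choose_symm_add]

/-- For `P = p ^ j` the left-hand side is Kummer's condition for a carry into digit `j` in
`a + b`. -/
lemma le_mod_add_mod_iff_exists_dvd_add {P a b : ℕ} (hb : b < P) :
    P ≤ b % P + a % P ↔ ∃ t, 0 < t ∧ t ≤ b ∧ P ∣ a + t := by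
  have ha := mod_add_div a P
  have haP := mod_lt a (show 0 < P by omega)
  rw [mod_eq_of_lt hb]
  constructor
  · intro h
    refine ⟨P - a % P, by omega, by omega, a / P + 1, ?_⟩
    rw [Nat.mul_add_one]
    omega
  · rintro ⟨t, ht, htb, hdvd⟩
    have hdvd' : P ∣ a % P + t := by
      rw [← Nat.dvd_add_left (dvd_mul_right P (a / P))]
      convert hdvd using 1
      omega
    have := le_of_dvd (by omega) hdvd'
    omega

variable {p : ℕ} [hp : Fact p.Prime]

lemma exists_le_and_carry_of_padicValNat_choose_pos {n k : ℕ}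
    (h : 0 < padicValNat p ((n + k).choose k)) :
    ∃ e, padicValNat p ((n + k).choose k) ≤ e ∧ p ^ e ≤ k % p ^ e + n % p ^ e := by
  by_contra! H
  have hsub : {e ∈ Ico 1 (log p (n + k) + 1) | p ^ e ≤ k % p ^ e + n % p ^ e} ⊆
      Ico 1 (padicValNat p ((n + k).choose k)) := by
    intro e he
    simp only [mem_filter, mem_Ico] at he ⊢
    by_contra hlt
    exact (H e (by omega)).not_ge he.2
  have hcard := card_le_card hsub
  rw [card_Ico, ← padicValNat_choose' (lt_add_one _)] at hcard
  omega

lemma le_log_add_padicValNat_choose {a b t E : ℕ} (ht : 0 < t) (htb : t ≤ b)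
    (h : p ^ E ∣ a + t) : E ≤ log p b + padicValNat p ((a + b).choose b) := by
  have hp1 := hp.out.one_lt
  have hsub : Ico (log p b + 1) (E + 1) ⊆
      {e ∈ Ico 1 (a + b + 1) | p ^ e ≤ b % p ^ e + a % p ^ e} := by
    intro e he
    rw [mem_Ico] at he
    have hdvd : p ^ e ∣ a + t := (pow_dvd_pow p (by omega)).trans h
    have hbe : b < p ^ e :=
      (lt_pow_succ_log_self hp1 b).trans_le (Nat.pow_le_pow_right (by omega) he.1)
    have hea : e < a + b + 1 :=
      (Nat.lt_pow_self hp1).trans_le ((le_of_dvd (by omega) hdvd).trans (by omega))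
    exact mem_filter.2 ⟨mem_Ico.2 ⟨by omega, hea⟩,
      (le_mod_add_mod_iff_exists_dvd_add hbe).2 ⟨t, ht, htb, hdvd⟩⟩
  have hcard := card_le_card hsub
  rw [card_Ico, ← padicValNat_choose' ((log_le_self _ _).trans_lt (lt_add_one _))] at hcard
  omega

lemma le_log_add_padicValNat_choose_sub_add {i q d D X E : ℕ} (hqi : q ≤ i) (hd : 0 < d)
    (hqd : q ≤ d) (hdD : d ≤ D) (hX : i * p - q + d = p * X) (hE : p ^ E ∣ X) :
    E ≤ log p D + padicValNat p ((i - q + D).choose D) := by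
  have hp0 := hp.out.pos
  have hqip : q ≤ i * p := hqi.trans (Nat.le_mul_of_pos_right i hp0)
  obtain ⟨s, hs⟩ : p ∣ d - q := by
    rw [← Nat.dvd_add_right (dvd_mul_left p i)]
    exact ⟨X, by omega⟩
  have hsX : i + s = X := by
    apply Nat.eq_of_mul_eq_mul_left hp0
    rw [mul_add, ← hs, mul_comm]
    omega
  have hts : 0 < q + s := by
    rcases Nat.eq_zero_or_pos s with rfl | h
    · simp at hs; omega
    · omega
  have hsps : s ≤ p * s := Nat.le_mul_of_pos_left s hp0
  exact le_log_add_padicValNat_choose (a := i - q) (b := D) hts (by omega)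
    (by rwa [show i - q + (q + s) = X by omega])

lemma le_log_add_padicValNat_choose_div {i q d X E : ℕ} (hqi : q ≤ i) (hdq : d < q)
    (hX : i * p - q + d = p * X) (hE : p ^ E ∣ X) :
    E ≤ log p (q / p) + padicValNat p ((i - 1).choose (q / p)) := by
  have hp1 := hp.out.one_lt
  have hqip : q ≤ i * p := hqi.trans (Nat.le_mul_of_pos_right i (by omega))
  obtain ⟨w, hw⟩ : p ∣ q - d := by
    rw [← Nat.dvd_add_right (dvd_mul_right p X)]
    exact ⟨i, by rw [mul_comm p i]; omega⟩
  have hwX : X + w = i := by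
    apply Nat.eq_of_mul_eq_mul_left (by omega : 0 < p)
    rw [mul_add, ← hw, mul_comm p i]
    omega
  have hw0 : 0 < w := by
    rcases Nat.eq_zero_or_pos w with rfl | h
    · simp at hw; omega
    · exact h
  have hwQ : w ≤ q / p := (le_div_iff_mul_le (by omega)).2 (by rw [mul_comm]; omega)
  have hQi : q / p < i := (div_lt_self (by omega) hp1).trans_le hqi
  have hE' := le_log_add_padicValNat_choose (a := i - 1 - q / p) (b := q / p)
    (t := q / p + 1 - w) (by omega) (by omega)
    (by rwa [show i - 1 - q / p + (q / p + 1 - w) = X by omega])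
  rwa [Nat.sub_add_cancel (by omega)] at hE'

lemma padicValNat_choose_mul_sub_add_lt (hp3 : 3 ≤ p) {i q D : ℕ} (hqi : q ≤ i)
    (hqD : q * (p - 1) + 2 ≤ D * p) :
    padicValNat p ((i * p - q + D).choose D) <
      D + padicValNat p ((i - q + D).choose D) + padicValNat p ((i - 1).choose (q / p)) := by
  have hp1 := hp.out.one_lt
  have hD : 0 < D := Nat.pos_of_ne_zero (by rintro rfl; simp at hqD)
  have hQD : q / p < D := (Nat.div_lt_iff_lt_mul (by omega)).2 <| by
    have := Nat.le_mul_of_pos_right q (show 0 < p - 1 by omega)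
    omega
  rcases Nat.eq_zero_or_pos (padicValNat p ((i * p - q + D).choose D)) with h0 | hpos
  · omega
  obtain ⟨e, hVe, hcarry⟩ := exists_le_and_carry_of_padicValNat_choose_pos hpos
  rcases le_or_gt (p ^ e) D with hsmall | hbig
  · have := le_log_of_pow_le hp1 hsmall
    have := log_lt_self p hD.ne'
    omega
  obtain ⟨E, rfl⟩ : ∃ E, e = E + 1 := ⟨e - 1, by omega⟩
  obtain ⟨d, hd, hdD, X, hX, hEX⟩ :
      ∃ d, 0 < d ∧ d ≤ D ∧ ∃ X, i * p - q + d = p * X ∧ p ^ E ∣ X := by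
    obtain ⟨d, hd, hdD, c, hc⟩ := (le_mod_add_mod_iff_exists_dvd_add hbig).1 hcarry
    exact ⟨d, hd, hdD, p ^ E * c, by rw [hc, ← mul_assoc, ← pow_succ'], dvd_mul_right _ _⟩
  -- `D = 1` forces `q = 0` and `d = 1`, but `p ∣ i * p - q + d`.
  have hD2 : 2 ≤ D := by
    by_contra
    obtain rfl : q = 0 := by
      by_contra
      have := Nat.le_mul_of_pos_left (p - 1) (show 0 < q by omega)
      have : D * p = p := by rw [show D = 1 by omega, one_mul]
      omega
    exact hp.out.ne_one <| Nat.dvd_one.1 <|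
      (Nat.dvd_add_right (dvd_mul_left p i)).1 ⟨X, by omega⟩
  have hlog := log_add_two_le_self hp3 hD2
  rcases le_or_gt q d with hqd | hdq
  · have := le_log_add_padicValNat_choose_sub_add hqi hd hqd hdD hX hEX
    omega
  · have := le_log_add_padicValNat_choose_div hqi hdq hX hEX
    have := log_mono_right (b := p) hQD.le
    omega

lemma padicValNat_choose_add_add (n m D : ℕ) :
    padicValNat p ((n + m + D).choose (m + D)) + padicValNat p ((m + D).choose D) =
      padicValNat p ((n + m + D).choose (n + D)) + padicValNat p ((n + D).choose D) := by
  rw [← padicValNat.mul (choose_ne_zero (by omega)) (choose_ne_zero (by omega)),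
    ← padicValNat.mul (choose_ne_zero (by omega)) (choose_ne_zero (by omega)),
    add_add_choose_mul_choose]

theorem padicValNat_add_add_choose_lt (hp3 : 3 ≤ p) {i q D : ℕ} (hqi : q ≤ i)
    (h : i * p - q + 2 ≤ (i - q + D) * p) :
    padicValNat p ((i * p - q + (i - q) + D).choose (i - q + D)) <
      D + padicValNat p ((i * p - q + (i - q) + D).choose (i * p - q + D)) +
        padicValNat p ((i - 1).choose ((i * p - q + p - 1) / p - 1)) := by
  have hp0 := hp.out.pos
  have hqip : q ≤ i * p := hqi.trans (Nat.le_mul_of_pos_right i hp0)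
  have hqD : q * (p - 1) + 2 ≤ D * p := by
    have := Nat.mul_le_mul_right p hqi
    have := Nat.le_mul_of_pos_right q hp0
    rw [Nat.add_mul, Nat.sub_mul] at h
    rw [Nat.mul_sub_one]
    omega
  have hQi : q / p ≤ i - 1 := by
    rcases Nat.eq_zero_or_pos q with rfl | hq0
    · simp
    · have := Nat.div_lt_self hq0 hp.out.one_lt
      omega
  rw [mul_sub_add_sub_one_div hp0 hqip, show i - q / p - 1 = i - 1 - q / p by omega,
    choose_symm hQi]
  have := padicValNat_choose_add_add (p := p) (i * p - q) (i - q) D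
  have := padicValNat_choose_mul_sub_add_lt hp3 hqi hqD
  omega

end Nat

theorem lemma11_valuation_ineq_general (p r α i : ℕ) (hp : p.Prime) (hp3 : 3 < p)
    (hϱα : (r + 1) / (p + 1) < α)
    (hi : (r - α + p - 1) / p - 1 < i) (hir : i * (p - 1) + α ≤ r) :
    0 < (i : ℤ) * ((p : ℤ) - 1) + 2 * (α : ℤ) - (r : ℤ) ∧
    (padicValNat p (r.choose α) : ℤ)
      < ((i : ℤ) * ((p : ℤ) - 1) + 2 * (α : ℤ) - (r : ℤ))
        + (padicValNat p (r.choose (i * (p - 1) + α)) : ℤ)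
        + (padicValNat p ((i - 1).choose ((r - α + p - 1) / p - 1)) : ℤ) := by
  have := Fact.mk hp
  have hαp : r + 1 < α * p + α := by
    rw [← Nat.mul_add_one]; exact (Nat.div_lt_iff_lt_mul (by omega)).1 hϱα
  have hn : r - α + p - 1 < i * p + p := by
    rw [← Nat.add_one_mul]; exact (Nat.div_lt_iff_lt_mul (by omega)).1 (by omega)
  have hip : i * (p - 1) = i * p - i := Nat.mul_sub_one i p
  have hiip : i ≤ i * p := Nat.le_mul_of_pos_right i hp.pos
  -- `i (p - 1) + 2 ≤ α (p - 1)` gives `i < α`, while `r ≥ i (p - 1) + 2 α` would give `α ≤ i`.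
  have hDpos : r < i * (p - 1) + 2 * α := by
    by_contra!
    have : i * (p - 1) < α * (p - 1) := by rw [hip, Nat.mul_sub_one]; omega
    have := Nat.lt_of_mul_lt_mul_right this
    omega
  obtain ⟨q, hq⟩ : ∃ q, q + (r - α) = i * p := ⟨_, Nat.sub_add_cancel (by omega)⟩
  obtain ⟨D, hD⟩ : ∃ D, D + r = i * (p - 1) + 2 * α := ⟨_, Nat.sub_add_cancel hDpos.le⟩
  have hval := Nat.padicValNat_add_add_choose_lt hp3.le (show q ≤ i by omega)
    (show i * p - q + 2 ≤ (i - q + D) * p by rw [show i - q + D = α by omega]; omega)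
  rw [show i * p - q + (i - q) + D = r by omega, show i - q + D = α by omega,
    show i * p - q + D = i * (p - 1) + α by omega, show i * p - q = r - α by omega] at hval
  have hDz : (D : ℤ) = i * (p - 1) + 2 * α - r := by
    have := congrArg (Nat.cast : ℕ → ℤ) hD
    push_cast [Nat.cast_sub hp.one_le] at this
    linarith
  rw [← hDz]
  exact ⟨by omega, by exact_mod_cast hval⟩

/-- Lemma 11 of the paper. Let `p > 3` be a prime, `r ≥ 1`,
`ϱ = ⌊(r+1)/(p+1)⌋`, let `α` be an integer with `ϱ < α` and `α(p-1) ≤ r`, and set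
`ϱ' = ⌈(r-α)/p⌉ - 1`.  Then for every integer `i` with `ϱ' < i` and `i(p-1)+α ≤ r`,
the integer `i(p-1)+2α-r` is positive and
`v_p(binom(r, α)) < (i(p-1)+2α-r) + v_p(binom(r, i(p-1)+α)) + v_p(binom(i-1, ϱ'))`. -/
theorem lemma11_valuation_ineq (p r α i : ℕ) (hp : p.Prime) (hp3 : 3 < p) (hr : 1 ≤ r)
    (hϱα : (r + 1) / (p + 1) < α) (hαr : α * (p - 1) ≤ r)
    (hi : (r - α + p - 1) / p - 1 < i) (hir : i * (p - 1) + α ≤ r) :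
    0 < (i : ℤ) * ((p : ℤ) - 1) + 2 * (α : ℤ) - (r : ℤ) ∧
    (padicValNat p (r.choose α) : ℤ)
      < ((i : ℤ) * ((p : ℤ) - 1) + 2 * (α : ℤ) - (r : ℤ))
        + (padicValNat p (r.choose (i * (p - 1) + α)) : ℤ)
        + (padicValNat p ((i - 1).choose ((r - α + p - 1) / p - 1)) : ℤ) :=
  lemma11_valuation_ineq_general p r α i hp hp3 hϱα hi hir
end

section
/- Let p > 3 be a prime, let ϱ ≥ 1 be an integer, and set r = ϱ(p+1)+1. Then for every integer j ≥ 1 with j(p−1) ≤ ϱ one has v_p(binom(r, ϱ)) < j(p−1) + v_p(binom(r, ϱ−j(p−1))) + v_p(binom(ϱ+j, j)). -/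
/-!
Comparing `r! = binom(r, ϱ) ϱ! (ϱp+1)! = binom(r, ϱ-k) (ϱ-k)! (ϱp+1+k)!` with `k = j(p-1)`
reduces the claim to factorial valuations. Since `ϱp+1+k ≤ p(ϱ+j)`, Legendre's recursion
`v_p((pm)!) = m + v_p(m!)` gives `v_p((ϱp+1+k)!) - v_p((ϱp+1)!) ≤ j + v_p((ϱ+j)!) - v_p(ϱ!)`,
and `v_p((ϱ+j)!) - v_p(ϱ!) = v_p(binom(ϱ+j, j)) + v_p(j!)`. As `v_p((ϱ-k)!) ≤ v_p(ϱ!)`,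
what remains is `j + v_p(j!) < 2j ≤ j(p-1)`.
-/

open Nat

section

variable {p : ℕ} [Fact p.Prime]

lemma padicValNat_add_choose_add_factorial (a b : ℕ) :
    padicValNat p ((a + b).choose b) + padicValNat p a ! + padicValNat p b !
      = padicValNat p (a + b)! := by
  have hchoose : (a + b).choose b ≠ 0 := (choose_pos (le_add_left b a)).ne'
  rw [← add_choose_mul_factorial_mul_factorial a b,
    padicValNat.mul (mul_ne_zero hchoose (factorial_ne_zero a)) (factorial_ne_zero b),
    padicValNat.mul hchoose (factorial_ne_zero a)]

lemma padicValNat_factorial_mono {m n : ℕ} (h : m ≤ n) :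
    padicValNat p m ! ≤ padicValNat p n ! :=
  (padicValNat_dvd_iff_le (factorial_ne_zero n)).1
    (pow_padicValNat_dvd.trans (factorial_dvd_factorial h))

lemma padicValNat_factorial_le_of_le_mul {n m : ℕ} (h : n ≤ p * m) :
    padicValNat p n ! ≤ padicValNat p m ! + m :=
  padicValNat_factorial_mul (p := p) m ▸ padicValNat_factorial_mono h

lemma padicValNat_factorial_mul_add_one (m : ℕ) :
    padicValNat p (p * m + 1)! = padicValNat p m ! + m := by
  rw [padicValNat_factorial_mul_add m (Fact.out : p.Prime).one_lt, padicValNat_factorial_mul]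

end

theorem lemma13_valuation_ineq_general (p r ϱ j : ℕ) (hp : p.Prime) (hp3 : 3 < p)
    (hrdef : r = ϱ * (p + 1) + 1)
    (hj1 : 1 ≤ j) (hj : j * (p - 1) ≤ ϱ) :
    padicValNat p (r.choose ϱ)
      < j * (p - 1) + padicValNat p (r.choose (ϱ - j * (p - 1)))
        + padicValNat p ((ϱ + j).choose j) := by
  have : Fact p.Prime := ⟨hp⟩
  set k := j * (p - 1)
  have hr : r = (p * ϱ + 1) + ϱ := by rw [hrdef]; ring
  have hr' : r = (p * ϱ + 1 + k) + (ϱ - k) := by rw [hr]; omega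
  have hchoose := padicValNat_add_choose_add_factorial (p := p) (p * ϱ + 1) ϱ
  have hchoose' := padicValNat_add_choose_add_factorial (p := p) (p * ϱ + 1 + k) (ϱ - k)
  have hchoose_j := padicValNat_add_choose_add_factorial (p := p) ϱ j
  rw [← hr] at hchoose
  rw [← hr'] at hchoose'
  have hbottom := padicValNat_factorial_mul_add_one (p := p) ϱ
  have htop : padicValNat p (p * ϱ + 1 + k)! ≤ padicValNat p (ϱ + j)! + (ϱ + j) :=
    padicValNat_factorial_le_of_le_mul (by
      have hkj : k + j = p * j := by
        rw [mul_comm p, ← Nat.mul_succ]; congr; omega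
      rw [mul_add]; omega)
  have hsub := padicValNat_factorial_mono (p := p) (Nat.sub_le ϱ k)
  have hj_fact := padicValNat_factorial_lt_of_ne_zero p (n := j) (by omega)
  have hk : 2 * j ≤ k := by rw [mul_comm]; exact Nat.mul_le_mul_left j (by omega)
  omega

/-- Lemma 13 of the paper. Let `p > 3` be a prime, `ϱ ≥ 1` an
integer, and `r = ϱ(p+1)+1`.  Then for every integer `j ≥ 1` with `j(p-1) ≤ ϱ` one has
`v_p(binom(r, ϱ)) < j(p-1) + v_p(binom(r, ϱ - j(p-1))) + v_p(binom(ϱ+j, j))`. -/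
theorem lemma13_valuation_ineq (p r ϱ j : ℕ) (hp : p.Prime) (hp3 : 3 < p)
    (hϱ : 1 ≤ ϱ) (hrdef : r = ϱ * (p + 1) + 1)
    (hj1 : 1 ≤ j) (hj : j * (p - 1) ≤ ϱ) :
    padicValNat p (r.choose ϱ)
      < j * (p - 1) + padicValNat p (r.choose (ϱ - j * (p - 1)))
        + padicValNat p ((ϱ + j).choose j) :=
  lemma13_valuation_ineq_general p r ϱ j hp hp3 hrdef hj1 hj
end

section
/- Let p > 3 be a prime, let ϱ ≥ 1 be an integer, and set r = ϱ(p+1)+1. Then for every integer i with ϱp < i(p−1)+ϱ ≤ r one has v_p(binom(r, ϱ)) < ((i−ϱ)(p−1)−1) + v_p(binom(r, i(p−1)+ϱ)) + v_p(binom(i−1, ϱ)). -/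
/-!
Put `t = (i - ϱ)(p - 1) - 1`, `k = i - ϱ - 1` and `d = i(p - 1) + ϱ = t + (ϱp + 1)`. Since
`ϱ + d = r + t`, the identity `C(r, ϱ) C(ϱ, t) = C(r, d) C(d, t)` gives
`v_p C(r, ϱ) ≤ v_p C(r, d) + v_p C(d, t)`. By Kummer, `v_p C(d, t)` counts the carries when adding
`t` and `ϱp + 1`; since `t + 1 < (k + 1)p`, a carry at a position `j + 1` with `k < p ^ j` forces a
carry at position `j` when adding `ϱ` and `k`. Hence `v_p C(d, t) ≤ log_p k + 1 + v_p C(i - 1, ϱ)`,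
and `log_p k + 1 < t` because `p > 3`.
-/

open Nat Finset

theorem choose_mul_choose_of_add_eq {n a b t : ℕ} (h : a + b = n + t) (ha : t ≤ a) (hb : t ≤ b) :
    n.choose a * a.choose t = n.choose b * b.choose t := by
  rw [choose_mul ha, choose_mul hb]
  exact congrArg _ (choose_symm_of_eq_add (by omega))

theorem padicValNat_choose_le_of_add_eq {p n a b t : ℕ} [Fact p.Prime] (h : a + b = n + t)
    (ha : t ≤ a) (hb : t ≤ b) :
    padicValNat p (n.choose a) ≤ padicValNat p (n.choose b) + padicValNat p (b.choose t) := by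
  have hval := congrArg (padicValNat p) (choose_mul_choose_of_add_eq h ha hb)
  rw [padicValNat.mul (choose_ne_zero (by omega)) (choose_ne_zero ha),
    padicValNat.mul (choose_ne_zero (by omega)) (choose_ne_zero hb)] at hval
  omega

/-- A carry at position `j + 1` in `t + (a * p + 1)` forces a carry at position `j` in `a + b`. -/
theorem pow_le_mod_add_mod_of_pow_succ_le {p a b t j : ℕ} (hb : b < p ^ j)
    (ht : t + 1 < (b + 1) * p) (h : p ^ (j + 1) ≤ t % p ^ (j + 1) + (a * p + 1) % p ^ (j + 1)) :
    p ^ j ≤ a % p ^ j + b % p ^ j := by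
  have hmod : (a * p + 1) % p ^ (j + 1) ≤ a % p ^ j * p + 1 := by
    rw [Nat.add_mod, pow_succ, Nat.mul_mod_mul_right]
    exact (Nat.mod_le _ _).trans (Nat.add_le_add_left (Nat.mod_le _ _) _)
  have := Nat.mod_le t (p ^ (j + 1))
  rw [Nat.mod_eq_of_lt hb]
  by_contra! hlt
  have := Nat.mul_le_mul_right p (show a % p ^ j + b + 1 ≤ p ^ j by omega)
  rw [← pow_succ, add_assoc, add_mul] at this
  omega

theorem padicValNat_choose_mul_add_one_add_le {p a b t : ℕ} [hp : Fact p.Prime] (hbt : b ≤ t)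
    (ht : t + 1 < (b + 1) * p) :
    padicValNat p ((a * p + 1 + t).choose t) ≤ log p b + 1 + padicValNat p ((b + a).choose a) := by
  set n := a * p + 1 + t
  have hp1 := hp.out.one_lt
  have hlog : log p n < n := log_lt_self p (by omega)
  have hba : b + a ≤ n := by have := Nat.le_mul_of_pos_right a hp.out.pos; omega
  have hlog' : log p (b + a) < n := (log_mono_right hba).trans_lt hlog
  rw [padicValNat_choose' hlog, padicValNat_choose' hlog',
    ← card_filter_add_card_filter_not (fun j => j ≤ log p b + 1)]
  refine Nat.add_le_add ?_ ?_
  · calc _ ≤ #(Ico 1 (log p b + 2)) := card_le_card fun j hj => by simp at hj ⊢; omega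
      _ = log p b + 1 := by simp
  · refine card_le_card_of_injOn (· - 1) (fun j hj => ?_) (fun j hj j' hj' h => ?_)
    · simp only [coe_filter, mem_filter, mem_Ico, Set.mem_ofPred_eq] at hj ⊢
      obtain ⟨⟨⟨hj1, hjn⟩, hcarry⟩, hjb⟩ := hj
      obtain ⟨e, rfl⟩ : ∃ e, j = e + 1 := ⟨j - 1, by omega⟩
      have hbe : b < p ^ e := lt_pow_of_log_lt hp1 (by omega)
      exact ⟨⟨by omega, by omega⟩, pow_le_mod_add_mod_of_pow_succ_le hbe ht hcarry⟩
    · simp only [coe_filter, mem_filter, mem_Ico, Set.mem_ofPred_eq] at hj hj' h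
      omega

theorem lemma14_valuation_ineq_general (p r ϱ i : ℕ) (hp : p.Prime) (hp3 : 3 < p)
    (hrdef : r = ϱ * (p + 1) + 1)
    (hi1 : ϱ * p < i * (p - 1) + ϱ) (hi2 : i * (p - 1) + ϱ ≤ r) :
    (padicValNat p (r.choose ϱ) : ℤ)
      < (((i : ℤ) - (ϱ : ℤ)) * ((p : ℤ) - 1) - 1)
        + (padicValNat p (r.choose (i * (p - 1) + ϱ)) : ℤ)
        + (padicValNat p ((i - 1).choose ϱ) : ℤ) := by
  have : Fact p.Prime := ⟨hp⟩
  obtain ⟨q, rfl⟩ : ∃ q, p = q + 1 := ⟨p - 1, by omega⟩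
  rw [Nat.add_sub_cancel] at hi1 hi2 ⊢
  obtain ⟨k, rfl⟩ : ∃ k, i = ϱ + k + 1 := by
    rw [mul_add_one] at hi1
    have hϱi : ϱ < i := lt_of_mul_lt_mul_right (show ϱ * q < i * q by omega) q.zero_le
    exact ⟨i - ϱ - 1, by omega⟩
  obtain ⟨t, ht⟩ : ∃ t, (k + 1) * q = t + 1 :=
    ⟨(k + 1) * q - 1, by have := Nat.mul_le_mul_left (k + 1) (show 1 ≤ q by omega); omega⟩
  have hd : (ϱ + k + 1) * q + ϱ = ϱ * (q + 1) + 1 + t := by linear_combination ht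
  have hr : r = ϱ * (q + 1) + 1 + ϱ := by rw [hrdef]; ring
  have hkt : k + 2 ≤ t := by nlinarith
  rw [hd] at hi2 ⊢
  rw [show ϱ + k + 1 - 1 = k + ϱ by omega]
  have hsplit := padicValNat_choose_le_of_add_eq (p := q + 1) (n := r) (a := ϱ)
    (b := ϱ * (q + 1) + 1 + t) (t := t) (by omega) (by omega) (by omega)
  have hcarry := padicValNat_choose_mul_add_one_add_le (p := q + 1) (a := ϱ) (b := k) (t := t)
    (by omega) (by nlinarith)
  have hlog := log_le_self (q + 1) k
  have hcast : (((ϱ + k + 1 : ℕ) : ℤ) - ϱ) * (((q + 1 : ℕ) : ℤ) - 1) - 1 = t := by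
    push_cast
    linear_combination (by exact_mod_cast ht : ((k : ℤ) + 1) * q = t + 1)
  rw [hcast]
  omega

/-- Lemma 14 of the paper. Let `p > 3` be a prime, `ϱ ≥ 1` an
integer, and `r = ϱ(p+1)+1`.  Then for every integer `i` with `ϱp < i(p-1)+ϱ ≤ r` one
has `v_p(binom(r, ϱ)) < ((i-ϱ)(p-1)-1) + v_p(binom(r, i(p-1)+ϱ)) + v_p(binom(i-1, ϱ))`. -/
theorem lemma14_valuation_ineq (p r ϱ i : ℕ) (hp : p.Prime) (hp3 : 3 < p)
    (hϱ : 1 ≤ ϱ) (hrdef : r = ϱ * (p + 1) + 1)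
    (hi1 : ϱ * p < i * (p - 1) + ϱ) (hi2 : i * (p - 1) + ϱ ≤ r) :
    (padicValNat p (r.choose ϱ) : ℤ)
      < (((i : ℤ) - (ϱ : ℤ)) * ((p : ℤ) - 1) - 1)
        + (padicValNat p (r.choose (i * (p - 1) + ϱ)) : ℤ)
        + (padicValNat p ((i - 1).choose ϱ) : ℤ) :=
  lemma14_valuation_ineq_general p r ϱ i hp hp3 hrdef hi1 hi2
end

section
/- Let p be a prime and let n ≥ 0 and l ≥ 1 be integers. Then (∑_{i=1}^{l} v_p(n+i)) − max_{1 ≤ i ≤ l} v_p(n+i) ≤ (l−1)/(p−1); that is, among any l consecutive positive integers, the sum of the p-adic valuations of all terms except one term of maximal valuation is at most (l−1)/(p−1). -/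
/-!
Write `v_p(x) = #{k ∈ [1, K] | p ^ k ∣ x}`, where `K` is the largest valuation among the `l`
terms, and exchange the two sums: `∑ v_p(n + i) = ∑_{k=1}^{K} N_k`, where `N_k` counts the
multiples of `p ^ k` among `l` consecutive integers. Since `N_k ≤ ⌊(l - 1) / p ^ k⌋ + 1`,
subtracting `K` leaves at most `∑_k ⌊(l - 1) / p ^ k⌋ ≤ (l - 1) / (p - 1)`.
-/

open Finset

namespace Nat

theorem padicValNat_eq_card_filter_pow_dvd {p m K : ℕ} [Fact p.Prime] (hm : m ≠ 0)
    (hK : padicValNat p m ≤ K) : padicValNat p m = #{k ∈ Icc 1 K | p ^ k ∣ m} := by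
  have : {k ∈ Icc 1 K | p ^ k ∣ m} = Icc 1 (padicValNat p m) := by
    ext k
    simp only [mem_filter, mem_Icc, padicValNat_dvd_iff_le hm]
    omega
  rw [this, card_Icc, add_tsub_cancel_right]

theorem sum_padicValNat_eq_sum_card_filter_pow_dvd {ι : Type*} {p K : ℕ} [Fact p.Prime]
    {s : Finset ι} {f : ι → ℕ} (hf : ∀ i ∈ s, f i ≠ 0) (hK : ∀ i ∈ s, padicValNat p (f i) ≤ K) :
    ∑ i ∈ s, padicValNat p (f i) = ∑ k ∈ Icc 1 K, #{i ∈ s | p ^ k ∣ f i} := by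
  rw [sum_congr rfl fun i hi => padicValNat_eq_card_filter_pow_dvd (hf i hi) (hK i hi)]
  simp only [card_filter]
  exact sum_comm

theorem card_filter_dvd_Ioc {a b : ℕ} (hab : a ≤ b) (d : ℕ) :
    #{x ∈ Ioc a b | d ∣ x} = b / d - a / d := by
  have hsplit : #{x ∈ Ioc 0 b | d ∣ x} = #{x ∈ Ioc 0 a | d ∣ x} + #{x ∈ Ioc a b | d ∣ x} := by
    rw [← Ioc_union_Ioc_eq_Ioc a.zero_le hab, filter_union,
      card_union_of_disjoint (disjoint_filter_filter (Ioc_disjoint_Ioc_of_le le_rfl))]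
  rw [Ioc_filter_dvd_card_eq_div, Ioc_filter_dvd_card_eq_div] at hsplit
  omega

theorem add_succ_div_le {d : ℕ} (hd : 0 < d) (n m : ℕ) :
    (n + (m + 1)) / d ≤ n / d + m / d + 1 := by
  have := div_add_mod n d
  have := div_add_mod m d
  have := mod_lt n hd
  have := mod_lt m hd
  rw [← Nat.lt_succ_iff, Nat.div_lt_iff_lt_mul hd]
  nlinarith

theorem card_filter_dvd_Ioc_add_succ_le {d : ℕ} (hd : 0 < d) (n m : ℕ) :
    #{x ∈ Ioc n (n + (m + 1)) | d ∣ x} ≤ m / d + 1 := by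
  rw [card_filter_dvd_Ioc (le_add_right n _), tsub_le_iff_left, ← add_assoc]
  exact add_succ_div_le hd n m

theorem sum_Icc_div_pow_le {p : ℕ} (hp : 2 ≤ p) (m K : ℕ) :
    ∑ k ∈ Icc 1 K, m / p ^ k ≤ m / (p - 1) := by
  rw [← Ico_add_one_right_eq_Icc]
  exact geom_sum_Ico_le hp m (K + 1)

theorem sum_padicValNat_Ioc_le {p : ℕ} [hp : Fact p.Prime] (n m : ℕ) :
    ∑ x ∈ Ioc n (n + (m + 1)), padicValNat p x
      ≤ m / (p - 1) + (Ioc n (n + (m + 1))).sup (padicValNat p) := by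
  set s := Ioc n (n + (m + 1))
  set K := s.sup (padicValNat p)
  calc ∑ x ∈ s, padicValNat p x = ∑ k ∈ Icc 1 K, #{x ∈ s | p ^ k ∣ x} :=
        sum_padicValNat_eq_sum_card_filter_pow_dvd
          (fun x hx => (pos_of_gt (mem_Ioc.1 hx).1).ne') (fun x hx => le_sup hx)
    _ ≤ ∑ k ∈ Icc 1 K, (m / p ^ k + 1) :=
        sum_le_sum fun k _ => card_filter_dvd_Ioc_add_succ_le (pow_pos hp.out.pos k) n m
    _ ≤ m / (p - 1) + K := by
        rw [sum_add_distrib, sum_const, card_Icc, smul_eq_mul, mul_one, add_tsub_cancel_right]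
        exact Nat.add_le_add_right (sum_Icc_div_pow_le hp.out.two_le m K) K

end Nat

/-- Let `p` be a prime and `n ≥ 0`, `l ≥ 1` integers.  Then
`(∑_{i=1}^{l} v_p(n+i)) − max_{1 ≤ i ≤ l} v_p(n+i) ≤ (l−1)/(p−1)`: among any `l`
consecutive positive integers, the sum of the `p`-adic valuations of all terms except
one term of maximal valuation is at most `(l−1)/(p−1)`. -/
theorem sum_valuations_minus_max (p n l : ℕ) (hp : p.Prime) (hl : 1 ≤ l) :
    ((∑ i ∈ Finset.Icc 1 l, padicValNat p (n + i) : ℕ) : ℚ)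
        - (((Finset.Icc 1 l).sup (fun i => padicValNat p (n + i)) : ℕ) : ℚ)
      ≤ ((l : ℚ) - 1) / ((p : ℚ) - 1) := by
  have : Fact p.Prime := ⟨hp⟩
  obtain ⟨m, rfl⟩ : ∃ m, l = m + 1 := ⟨l - 1, by omega⟩
  have hIoc : (Icc 1 (m + 1)).map (addLeftEmbedding n) = Ioc n (n + (m + 1)) := by
    rw [map_add_left_Icc, Icc_add_one_left_eq_Ioc]
  have key := Nat.sum_padicValNat_Ioc_le (p := p) n m
  rw [← hIoc, sum_map, sup_map] at key
  simp only [Function.comp_def, addLeftEmbedding_apply] at key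
  have hcast : ((m / (p - 1) : ℕ) : ℚ) ≤ (m : ℚ) / ((p : ℚ) - 1) := by
    simpa [Nat.cast_sub hp.one_le] using Nat.cast_div_le (m := m) (n := p - 1) (α := ℚ)
  rw [Nat.cast_add_one, add_sub_cancel_right, sub_le_iff_le_add]
  exact (Nat.cast_le.2 key).trans (by push_cast; gcongr)
end

section
/- Let p > 3 be a prime, let r and α be integers with 1 ≤ α ≤ r−1, set ϱ' = ⌈(r−α)/p⌉ − 1, and let j ≥ 1 be an integer. Then v_p(∏_{s=1}^{j(p−1)} (r−α+s)) ≤ v_p(∏_{s=1}^{j} (ϱ'+s)) + ⌊(j(p−1)+p−1)/p⌋. -/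
/-!
Write `a = r - α` and `J = j(p - 1)`, so that `ϱ' = ⌈a/p⌉ - 1`. The multiples of `p` among
`a + 1, …, a + J` are the `p u` with `a/p < u ≤ (a + J)/p`; there are at most `⌈J/p⌉` of them,
and since `ϱ' ≤ a/p` and `(a + J)/p ≤ ϱ' + j`, each such `u` is a factor of `(ϱ' + 1) ⋯ (ϱ' + j)`.
Legendre's `v_p(n!) = n/p + v_p((n/p)!)` makes the first step an identity of valuations.
-/

open Finset Nat

namespace Nat

lemma prod_Icc_add_eq_prod_Ioc (a n : ℕ) :
    ∏ s ∈ Icc 1 n, (a + s) = ∏ t ∈ Ioc a (a + n), t := by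
  have h := prod_map (Ioc 0 n) (addLeftEmbedding a) id
  rw [map_add_left_Ioc, add_zero] at h
  exact (Icc_add_one_left_eq_Ioc 0 n ▸ h).symm

lemma prod_Ioc_zero_id_eq_factorial (n : ℕ) : ∏ t ∈ Ioc 0 n, t = n ! := by
  rw [← Ico_add_one_add_one_eq_Ioc, zero_add, prod_Ico_id_eq_factorial]

lemma factorial_mul_prod_Ioc {a b : ℕ} (hab : a ≤ b) : a ! * ∏ t ∈ Ioc a b, t = b ! := by
  rw [← prod_Ioc_zero_id_eq_factorial, ← prod_Ioc_zero_id_eq_factorial,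
    prod_Ioc_consecutive _ (zero_le a) hab]

lemma prod_Ioc_ne_zero (a b : ℕ) : ∏ t ∈ Ioc a b, t ≠ 0 :=
  prod_ne_zero_iff.mpr fun _ ht => (pos_of_gt (mem_Ioc.mp ht).1).ne'

lemma add_div_sub_div_le (a J : ℕ) {p : ℕ} (hp : 0 < p) :
    (a + J) / p - a / p ≤ (J + p - 1) / p := by
  have ha : a + J ≤ p * (a / p) + (J + p - 1) := by
    have := lt_div_mul_add (a := a) hp
    rw [mul_comm]; omega
  exact Nat.sub_le_iff_le_add'.mpr <| (Nat.div_le_div_right ha).trans_eq (mul_add_div hp _ _)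

lemma ceilDiv_sub_one_le_div (a : ℕ) {p : ℕ} (hp : 0 < p) : (a + p - 1) / p - 1 ≤ a / p := by
  have := add_div_le_div_add_div_add_one a (p - 1) p
  rw [div_eq_of_lt (by omega : p - 1 < p), add_zero,
    ← Nat.add_sub_assoc (one_le_iff_ne_zero.mpr hp.ne')] at this
  exact Nat.sub_le_iff_le_add.mpr this

lemma add_mul_pred_div_le (a : ℕ) {p j : ℕ} (hp : 0 < p) (hj : 1 ≤ j) :
    (a + j * (p - 1)) / p ≤ (a + p - 1) / p - 1 + j := by
  have hc : a ≤ (a + p - 1) / p * p := by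
    have := lt_div_mul_add (a := a + p - 1) hp
    omega
  have hlt : (a + j * (p - 1)) / p < (a + p - 1) / p + j := by
    rw [Nat.div_lt_iff_lt_mul hp, add_mul, Nat.mul_sub_one]
    have : j ≤ j * p := Nat.le_mul_of_pos_right j hp
    omega
  omega

variable {p : ℕ} [Fact p.Prime]

lemma padicValNat_prod_Ioc_add_padicValNat_factorial {a b : ℕ} (hab : a ≤ b) :
    padicValNat p (∏ t ∈ Ioc a b, t) + padicValNat p a ! = padicValNat p b ! := by
  rw [← factorial_mul_prod_Ioc hab, padicValNat.mul (factorial_ne_zero a) (prod_Ioc_ne_zero a b),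
    add_comm]

lemma padicValNat_prod_Ioc_le_of_subset {a b x y : ℕ} (hax : a ≤ x) (hyb : y ≤ b) :
    padicValNat p (∏ t ∈ Ioc x y, t) ≤ padicValNat p (∏ t ∈ Ioc a b, t) := by
  obtain ⟨c, hc⟩ := prod_dvd_prod_of_subset _ _ (fun t => t) (Ioc_subset_Ioc hax hyb)
  have hc0 : c ≠ 0 := by rintro rfl; exact prod_Ioc_ne_zero a b (hc.trans (mul_zero _))
  rw [hc, padicValNat.mul (prod_Ioc_ne_zero x y) hc0]
  exact le_add_right _ _

lemma padicValNat_factorial_eq_div_add (n : ℕ) :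
    padicValNat p n ! = n / p + padicValNat p (n / p)! := by
  rw [← padicValNat_mul_div_factorial, padicValNat_factorial_mul, add_comm]

lemma padicValNat_prod_Ioc {a b : ℕ} (hab : a ≤ b) :
    padicValNat p (∏ t ∈ Ioc a b, t)
      = b / p - a / p + padicValNat p (∏ u ∈ Ioc (a / p) (b / p), u) := by
  have hdiv : a / p ≤ b / p := Nat.div_le_div_right hab
  have h := padicValNat_prod_Ioc_add_padicValNat_factorial (p := p) hab
  have hq := padicValNat_prod_Ioc_add_padicValNat_factorial (p := p) hdiv
  rw [padicValNat_factorial_eq_div_add a, padicValNat_factorial_eq_div_add b] at h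
  omega

end Nat

theorem valuation_product_bound_general (p r α j : ℕ) (hp : p.Prime) (hj : 1 ≤ j) :
    padicValNat p (∏ s ∈ Finset.Icc 1 (j * (p - 1)), (r - α + s))
      ≤ padicValNat p (∏ s ∈ Finset.Icc 1 j, ((r - α + p - 1) / p - 1 + s))
        + (j * (p - 1) + p - 1) / p := by
  have : Fact p.Prime := ⟨hp⟩
  rw [prod_Icc_add_eq_prod_Ioc, prod_Icc_add_eq_prod_Ioc, padicValNat_prod_Ioc le_self_add,
    add_comm]
  gcongr
  · exact padicValNat_prod_Ioc_le_of_subset (ceilDiv_sub_one_le_div _ hp.pos)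
      (add_mul_pred_div_le _ hp.pos hj)
  · exact add_div_sub_div_le _ _ hp.pos

/-- Let `p > 3` be a prime, `r` and `α` integers with `1 ≤ α ≤ r-1`,
set `ϱ' = ⌈(r-α)/p⌉ - 1`, and let `j ≥ 1` be an integer.  Then
`v_p(∏_{s=1}^{j(p-1)} (r-α+s)) ≤ v_p(∏_{s=1}^{j} (ϱ'+s)) + ⌊(j(p-1)+p-1)/p⌋`. -/
theorem valuation_product_bound (p r α j : ℕ) (hp : p.Prime) (hp3 : 3 < p)
    (hα1 : 1 ≤ α) (hαr : α ≤ r - 1) (hj : 1 ≤ j) :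
    padicValNat p (∏ s ∈ Finset.Icc 1 (j * (p - 1)), (r - α + s))
      ≤ padicValNat p (∏ s ∈ Finset.Icc 1 j, ((r - α + p - 1) / p - 1 + s))
        + (j * (p - 1) + p - 1) / p :=
  valuation_product_bound_general p r α j hp hj
end
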